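/- arXiv:1306.0082 — 4 statements merged into one kernel-verified Lean document; each statement's English description precedes it below -/
import Mathlib

section
/- Let G : B_R → ℝ be a concave function (differentiable where needed) satisfying |G(y) − G(0) − ⟨y, ∇G(0)⟩| ≤ K·R² for all y ∈ B_R, for some K > 0. Then the image ∇G(B_{R/2}) of the half-ball under the gradient map has Lebesgue measure at most (8K)ⁿ · |B_{R/2}|. -/
open Metric Set MeasureTheory
open scoped RealInnerProductSpace

noncomputable section

/-- Gradient inequality for concave functions: the function lies below its tangent. -/
lemma concave_grad_ineq {E : Type*} [NormedAddCommGroup E] [InnerProductSpace ℝ E] [CompleteSpace E]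
    {s : Set E} {G : E → ℝ} (hG : ConcaveOn ℝ s G) {y z : E}
    (hy : y ∈ s) (hz : z ∈ s) (hd : DifferentiableAt ℝ G y) :
    G z ≤ G y + ⟪z - y, gradient G y⟫ := by
  rcases eq_or_ne z y with rfl | hne
  · simp
  have hfd : HasFDerivAt G ((InnerProductSpace.toDual ℝ E) (gradient G y)) y :=
    hasGradientAt_iff_hasFDerivAt.mp hd.hasGradientAt
  set φ : ℝ → ℝ := fun t => -G (y + t • (z - y)) with hφ
  have hφconv : ConvexOn ℝ (Icc (0:ℝ) 1) φ := by
    have hmap : ∀ t : ℝ, (AffineMap.lineMap y z : ℝ →ᵃ[ℝ] E) t = y + t • (z - y) := by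
      intro t; simp [AffineMap.lineMap_apply]; abel
    have h1 : ConcaveOn ℝ ((AffineMap.lineMap y z : ℝ →ᵃ[ℝ] E) ⁻¹' s)
        (G ∘ (AffineMap.lineMap y z : ℝ →ᵃ[ℝ] E)) := hG.comp_affineMap _
    have h2 := (h1.subset (fun t ht => by
        simp only [mem_preimage, hmap]
        exact hG.1.segment_subset hy hz (by
          rw [segment_eq_image']
          exact ⟨t, ht, rfl⟩)) (convex_Icc 0 1)).neg
    refine h2.congr fun t _ => ?_
    simp [φ, hmap]
  have hφderiv : HasDerivAt φ (-⟪gradient G y, z - y⟫) 0 := by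
    have hline : HasDerivAt (fun t : ℝ => y + t • (z - y)) (z - y) 0 := by
      simpa using ((hasDerivAt_id (0:ℝ)).smul_const (z - y)).const_add y
    have hfd' : HasFDerivAt G ((InnerProductSpace.toDual ℝ E) (gradient G y))
        (y + (0:ℝ) • (z - y)) := by simpa using hfd
    have := (hfd'.comp_hasDerivAt 0 hline)
    simpa [φ, InnerProductSpace.toDual_apply_apply, Function.comp_def, Pi.neg_def] using this.neg
  have hslope := hφconv.le_slope_of_hasDerivAt (left_mem_Icc.2 zero_le_one)
    (right_mem_Icc.2 zero_le_one) zero_lt_one hφderiv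
  have hs : slope φ 0 1 = φ 1 - φ 0 := by simp [slope_def_field]
  rw [hs] at hslope
  simp only [φ, zero_smul, add_zero, one_smul] at hslope
  have : y + (z - y) = z := by abel
  rw [this] at hslope
  rw [real_inner_comm]
  linarith

theorem stmt_1 {n : ℕ} (R K : ℝ) (hR : 0 < R) (hK : 0 < K)
    (G : EuclideanSpace ℝ (Fin n) → ℝ)
    (hG : ConcaveOn ℝ (ball (0 : EuclideanSpace ℝ (Fin n)) R) G)
    (hdiff : ∀ y ∈ ball (0 : EuclideanSpace ℝ (Fin n)) (R / 2), DifferentiableAt ℝ G y)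
    (hd0 : DifferentiableAt ℝ G 0)
    (hKR : ∀ y ∈ ball (0 : EuclideanSpace ℝ (Fin n)) R,
      |G y - G 0 - ⟪y, gradient G 0⟫| ≤ K * R ^ 2) :
    volume (gradient G '' ball (0 : EuclideanSpace ℝ (Fin n)) (R / 2))
      ≤ ENNReal.ofReal ((8 * K) ^ n) * volume (ball (0 : EuclideanSpace ℝ (Fin n)) (R / 2)) := by
  set g0 := gradient G 0 with hg0
  -- the image is contained in a closed ball of radius 4 K R around g0
  have hsub : gradient G '' ball (0 : EuclideanSpace ℝ (Fin n)) (R / 2) ⊆ closedBall g0 (4 * K * R) := by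
    rintro _ ⟨y, hy, rfl⟩
    rw [mem_closedBall, dist_eq_norm]
    set w := gradient G y - g0 with hw
    rcases eq_or_ne w 0 with h0 | h0
    · rw [h0]; simp; positivity
    · -- choose z := y - (R/2) • (unit vector in direction w)
      set u : EuclideanSpace ℝ (Fin n) := ‖w‖⁻¹ • w with hu
      have hnu : ‖u‖ = 1 := by
        rw [hu, norm_smul, norm_inv, norm_norm, inv_mul_cancel₀ (norm_ne_zero_iff.2 h0)]
      set z : EuclideanSpace ℝ (Fin n) := y - (R / 2) • u with hz
      have hyR : y ∈ ball (0 : EuclideanSpace ℝ (Fin n)) R := by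
        rw [mem_ball_zero_iff] at hy ⊢; linarith
      have hzR : z ∈ ball (0 : EuclideanSpace ℝ (Fin n)) R := by
        rw [mem_ball_zero_iff] at hy ⊢
        calc ‖z‖ ≤ ‖y‖ + ‖(R / 2) • u‖ := norm_sub_le _ _
          _ = ‖y‖ + R / 2 := by
              rw [norm_smul, hnu, mul_one, Real.norm_of_nonneg (by linarith)]
          _ < R := by linarith
      have hkey := concave_grad_ineq hG hyR hzR (hdiff y hy)
      have h1 := hKR y hyR
      have h2 := hKR z hzR
      rw [abs_le] at h1 h2
      have hinw : ⟪z - y, gradient G y⟫ = ⟪z - y, g0⟫ + ⟪z - y, w⟫ := by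
        rw [hw, inner_sub_right]; ring
      have hzw : ⟪z - y, w⟫ = -(R / 2) * ‖w‖ := by
        have : z - y = -((R / 2) • u) := by rw [hz]; abel
        rw [this, inner_neg_left, inner_smul_left, hu, inner_smul_left,
          real_inner_self_eq_norm_sq]
        simp only [conj_trivial]
        have : ‖w‖ ≠ 0 := norm_ne_zero_iff.2 h0
        field_simp
      -- combine: G z ≤ G y + ⟪z-y,g0⟫ - (R/2)‖w‖, and G z - G y ≥ ⟪z-y,g0⟫ - 2KR²
      have hzy : ⟪z - y, g0⟫ = ⟪z, g0⟫ - ⟪y, g0⟫ := by rw [inner_sub_left]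
      have hwle : (R / 2) * ‖w‖ ≤ 2 * (K * R ^ 2) := by
        rw [hinw, hzw, hzy] at hkey
        linarith [h1.2, h2.1]
      have : ‖w‖ ≤ 4 * K * R := by
        have hR2 : (0:ℝ) < R / 2 := by linarith
        rw [← mul_le_mul_iff_right₀ hR2]
        calc (R / 2) * ‖w‖ ≤ 2 * (K * R ^ 2) := hwle
          _ = R / 2 * (4 * K * R) := by ring
      exact this
  rcases Nat.eq_zero_or_pos n with hn | hn
  · subst hn
    haveI : Subsingleton (EuclideanSpace ℝ (Fin 0)) := by
      infer_instance
    have himg : gradient G '' ball (0 : EuclideanSpace ℝ (Fin 0)) (R / 2)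
        ⊆ ball (0 : EuclideanSpace ℝ (Fin 0)) (R / 2) := by
      intro x _
      rw [mem_ball]
      have : dist x (0 : EuclideanSpace ℝ (Fin 0)) = 0 := by
        rw [Subsingleton.elim x 0]; simp
      rw [this]; linarith
    calc volume (gradient G '' ball (0 : EuclideanSpace ℝ (Fin 0)) (R / 2))
        ≤ volume (ball (0 : EuclideanSpace ℝ (Fin 0)) (R / 2)) := measure_mono himg
      _ = ENNReal.ofReal ((8 * K) ^ 0) * volume (ball (0 : EuclideanSpace ℝ (Fin 0)) (R / 2)) := by
          simp
  · haveI : Nontrivial (EuclideanSpace ℝ (Fin n)) :=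
      nontrivial_of_ne (EuclideanSpace.single (⟨0, hn⟩ : Fin n) (1:ℝ)) 0 (by
        intro h
        have := congrArg norm h
        simp [EuclideanSpace.norm_single] at this)
    calc volume (gradient G '' ball (0 : EuclideanSpace ℝ (Fin n)) (R / 2))
        ≤ volume (closedBall g0 (4 * K * R)) := measure_mono hsub
      _ = ENNReal.ofReal ((4 * K * R) ^ (Module.finrank ℝ (EuclideanSpace ℝ (Fin n)))) *
            volume (ball (0 : EuclideanSpace ℝ (Fin n)) 1) := by
          rw [Measure.addHaar_closedBall _ _ (by positivity)]
      _ = ENNReal.ofReal ((8 * K) ^ n) *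
            (ENNReal.ofReal ((R / 2) ^ (Module.finrank ℝ (EuclideanSpace ℝ (Fin n)))) *
            volume (ball (0 : EuclideanSpace ℝ (Fin n)) 1)) := by
          rw [finrank_euclideanSpace_fin, ← mul_assoc, ← ENNReal.ofReal_mul (by positivity),
            ← mul_pow]
          ring_nf
      _ = ENNReal.ofReal ((8 * K) ^ n) * volume (ball (0 : EuclideanSpace ℝ (Fin n)) (R / 2)) := by
          rw [Measure.addHaar_ball _ _ (by positivity : (0:ℝ) ≤ R / 2)]
end
end

section
/- Fix δ ∈ (0,1) and ξ ∈ 𝕊^{n−1}. Let V_ξ = {z ∈ ℝⁿ : |⟨z/|z|, ξ⟩| ≥ δ}, R = B_1 \ B_{1/2}, and R(0,V_ξ) = R ∩ V_ξ. Then there exist ε₀ > 0 and l ∈ (0,1/2), depending only on n and δ, such that for every concave function G : B_1 → ℝ and every b > 0 satisfying |{z ∈ R(0,V_ξ) : G(z) < G(0) + ⟨z, ∇G(0)⟩ − b}| ≤ ε₀ |R(0,V_ξ)|, one has G(y) ≥ G(0) + ⟨y, ∇G(0)⟩ − b for every y ∈ B_l. -/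
open Metric Set MeasureTheory
open scoped RealInnerProductSpace

noncomputable section

/-- The double cone of opening `δ` around the direction `ξ`:
`{z : |⟨z/|z|, ξ⟩| ≥ δ}` (written without dividing by `|z|`). -/
def secCone {n : ℕ} (δ : ℝ) (ξ : EuclideanSpace ℝ (Fin n)) : Set (EuclideanSpace ℝ (Fin n)) :=
  {z | δ * ‖z‖ ≤ |⟪z, ξ⟫|}

set_option maxHeartbeats 2000000 in
theorem stmt_3 {n : ℕ} (δ : ℝ) (hδ : δ ∈ Set.Ioo (0 : ℝ) 1) :
    ∃ ε₀ > (0 : ℝ), ∃ l ∈ Set.Ioo (0 : ℝ) (1 / 2),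
      ∀ ξ : EuclideanSpace ℝ (Fin n), ‖ξ‖ = 1 →
      ∀ G : EuclideanSpace ℝ (Fin n) → ℝ,
        ConcaveOn ℝ (ball (0 : EuclideanSpace ℝ (Fin n)) 1) G →
        DifferentiableAt ℝ G 0 →
        ∀ b > (0 : ℝ),
        volume {z ∈ (ball (0 : EuclideanSpace ℝ (Fin n)) 1 \ ball 0 (1 / 2)) ∩ secCone δ ξ |
            G z < G 0 + ⟪z, gradient G 0⟫ - b}
          ≤ ENNReal.ofReal ε₀ *
            volume ((ball (0 : EuclideanSpace ℝ (Fin n)) 1 \ ball 0 (1 / 2)) ∩ secCone δ ξ) →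
        ∀ y ∈ ball (0 : EuclideanSpace ℝ (Fin n)) l,
          G 0 + ⟪y, gradient G 0⟫ - b ≤ G y := by
  obtain ⟨hδ0, hδ1⟩ := hδ
  have h1δ : (0 : ℝ) < 1 - δ := by linarith
  set r : ℝ := (1 - δ) / 50 with hr_def
  have hr0 : 0 < r := by positivity
  set l : ℝ := (1 - δ) / 100 with hl_def
  have hl0 : 0 < l := by positivity
  refine ⟨r ^ n / 4, by positivity, l, ⟨hl0, by rw [hl_def]; linarith⟩, ?_⟩
  intro ξ hξ G hG hdiff b hb hmeas y hy
  clear_value r l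
  by_contra hcon
  push_neg at hcon
  haveI : Nontrivial (EuclideanSpace ℝ (Fin n)) := by
    refine nontrivial_of_ne ξ 0 fun h => ?_
    rw [h, norm_zero] at hξ; norm_num at hξ
  set L : EuclideanSpace ℝ (Fin n) →L[ℝ] ℝ := fderiv ℝ G 0 with hLdef
  have key : ∀ z : EuclideanSpace ℝ (Fin n), (⟪z, gradient G 0⟫ : ℝ) = L z := by
    intro z
    rw [real_inner_comm]
    exact InnerProductSpace.toDual_symm_apply
  set f : EuclideanSpace ℝ (Fin n) → ℝ := fun z => G 0 + L z - G z with hfdef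
  clear_value f
  have hf0 : f 0 = 0 := by simp [hfdef]
  have hball0 : (0 : EuclideanSpace ℝ (Fin n)) ∈ ball (0 : EuclideanSpace ℝ (Fin n)) 1 := by simp
  have hfconv : ConvexOn ℝ (ball (0 : EuclideanSpace ℝ (Fin n)) 1) f := by
    refine ⟨convex_ball _ _, fun z hz w hw a c ha hc hac => ?_⟩
    have h2 := hG.2 hz hw ha hc hac
    have hL2 : L (a • z + c • w) = a * L z + c * L w := by
      rw [map_add, L.map_smul, L.map_smul, smul_eq_mul, smul_eq_mul]
    simp only [smul_eq_mul] at h2 ⊢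
    have hG0 : a * G 0 + c * G 0 = G 0 := by rw [← add_mul, hac, one_mul]
    simp only [hfdef]
    rw [hL2]
    linarith
  -- nonnegativity of f on the unit ball
  have hfd : HasFDerivAt f (0 : EuclideanSpace ℝ (Fin n) →L[ℝ] ℝ) 0 := by
    have h1 : HasFDerivAt G L 0 := by rw [hLdef]; exact hdiff.hasFDerivAt
    have h2 : HasFDerivAt (fun w => G 0 + L w) L 0 := (L.hasFDerivAt).const_add (G 0)
    have h3 := h2.sub h1
    rw [sub_self] at h3
    rw [hfdef]
    exact h3
  have hmin : ∀ z ∈ ball (0 : EuclideanSpace ℝ (Fin n)) 1, 0 ≤ f z := by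
    intro z hz
    rcases eq_or_ne z 0 with rfl | hzne
    · rw [hf0]
    have hmem : ∀ s : ℝ, s ∈ Icc (0 : ℝ) 1 → s • z ∈ ball (0 : EuclideanSpace ℝ (Fin n)) 1 := by
      intro s hs
      rw [mem_ball_zero_iff] at hz ⊢
      rw [norm_smul, Real.norm_eq_abs, abs_of_nonneg hs.1]
      nlinarith [hs.2, norm_nonneg z]
    have hφconv : ConvexOn ℝ (Icc (0 : ℝ) 1) (fun t : ℝ => f (t • z)) := by
      refine ⟨convex_Icc _ _, fun s hs t ht a c ha hc hac => ?_⟩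
      have := hfconv.2 (hmem s hs) (hmem t ht) ha hc hac
      have hrw : a • (s • z) + c • (t • z) = (a * s + c * t) • z := by
        rw [smul_smul, smul_smul, add_smul]
      rw [hrw] at this
      simpa using this
    have hφd : HasDerivAt (fun t : ℝ => f (t • z)) 0 0 := by
      have hz' : HasDerivAt (fun t : ℝ => t • z) z 0 := by
        simpa using (hasDerivAt_id (0 : ℝ)).smul_const z
      have hfd' : HasFDerivAt f (0 : EuclideanSpace ℝ (Fin n) →L[ℝ] ℝ) ((0 : ℝ) • z) := by rwa [zero_smul]
      have h3 := hfd'.comp_hasDerivAt 0 hz'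
      rw [ContinuousLinearMap.zero_apply] at h3
      exact h3
    have hslope := hφconv.le_slope_of_hasDerivAt (by simp : (0:ℝ) ∈ Icc (0:ℝ) 1)
      (by simp : (1:ℝ) ∈ Icc (0:ℝ) 1) one_pos hφd
    have : slope (fun t : ℝ => f (t • z)) 0 1 = f z := by
      rw [slope_def_field]
      simp [hf0]
    rw [this] at hslope
    exact hslope
  -- the bad set
  set S : Set (EuclideanSpace ℝ (Fin n)) := (ball (0 : EuclideanSpace ℝ (Fin n)) 1 \ ball 0 (1 / 2)) ∩ secCone δ ξ with hSdef
  set A : Set (EuclideanSpace ℝ (Fin n)) := {z ∈ S | G z < G 0 + ⟪z, gradient G 0⟫ - b} with hAdef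
  have hyl : ‖y‖ < l := by rwa [mem_ball_zero_iff] at hy
  have hby : b < f y := by
    simp only [hfdef]
    rw [← key]
    linarith
  -- membership in S for points near ±(3/4)ξ
  have hSmem : ∀ w : EuclideanSpace ℝ (Fin n), ∀ sgn : ℝ, (sgn = 1 ∨ sgn = -1) →
      ‖w - (sgn * (3/4)) • ξ‖ ≤ (1 - δ) / 25 → w ∈ S ∧ w ∈ ball (0 : EuclideanSpace ℝ (Fin n)) 1 := by
    intro w sgn hsgn hw
    set ρ : ℝ := (1 - δ) / 25 with hρdef
    clear_value ρ
    have hρ1 : ρ ≤ 1 / 25 := by rw [hρdef]; linarith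
    have hsgnnorm : ‖(sgn * (3/4)) • ξ‖ = 3 / 4 := by
      rw [norm_smul, Real.norm_eq_abs, hξ, mul_one]
      rcases hsgn with h | h <;> rw [h] <;> norm_num
    have hwub : ‖w‖ ≤ 3 / 4 + ρ := by
      calc ‖w‖ = ‖(w - (sgn * (3/4)) • ξ) + (sgn * (3/4)) • ξ‖ := by
              rw [sub_add_cancel]
        _ ≤ ‖w - (sgn * (3/4)) • ξ‖ + ‖(sgn * (3/4)) • ξ‖ := norm_add_le _ _
        _ ≤ ρ + (3/4) := by rw [hsgnnorm]; linarith
        _ = 3/4 + ρ := by ring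
    have hwlb : 3 / 4 - ρ ≤ ‖w‖ := by
      have := norm_sub_norm_le ((sgn * (3/4)) • ξ) w
      rw [hsgnnorm, norm_sub_rev] at this
      linarith
    have hinner : 3 / 4 - ρ ≤ |⟪w, ξ⟫| := by
      have hCS : |⟪w - (sgn * (3/4)) • ξ, ξ⟫| ≤ ρ := by
        calc |⟪w - (sgn * (3/4)) • ξ, ξ⟫| ≤ ‖w - (sgn * (3/4)) • ξ‖ * ‖ξ‖ :=
          abs_real_inner_le_norm _ _
          _ ≤ ρ := by rw [hξ, mul_one]; exact hw
      have hξξ : (⟪ξ, ξ⟫ : ℝ) = 1 := by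
        rw [real_inner_self_eq_norm_sq, hξ]; norm_num
      have hdiffinner : sgn * (3/4) - ⟪w, ξ⟫ = -⟪w - (sgn * (3/4)) • ξ, ξ⟫ := by
        rw [inner_sub_left, real_inner_smul_left, hξξ]; ring
      have habs : |sgn * (3/4)| = 3/4 := by rcases hsgn with rfl | rfl <;> norm_num
      have h1 : |sgn * (3/4)| - |⟪w, ξ⟫| ≤ |sgn * (3/4) - ⟪w, ξ⟫| :=
        abs_sub_abs_le_abs_sub _ _
      have h2 : |sgn * (3/4) - ⟪w, ξ⟫| ≤ ρ := by
        rw [hdiffinner, abs_neg]; exact hCS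
      linarith
    have hw1 : ‖w‖ < 1 := by linarith
    have hw12 : 1 / 2 ≤ ‖w‖ := by linarith
    have hcone : δ * ‖w‖ ≤ |⟪w, ξ⟫| := by
      calc δ * ‖w‖ ≤ δ * (3/4 + ρ) := mul_le_mul_of_nonneg_left hwub hδ0.le
        _ ≤ 3/4 - ρ := by
            rw [hρdef]
            nlinarith [mul_nonneg h1δ.le (show (0:ℝ) ≤ 3/4 - (1 + δ)/25 by linarith)]
        _ ≤ |⟪w, ξ⟫| := hinner
    refine ⟨⟨⟨?_, ?_⟩, hcone⟩, ?_⟩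
    · rwa [mem_ball_zero_iff]
    · rw [mem_ball_zero_iff]; push_neg; linarith
    · rwa [mem_ball_zero_iff]
  -- the small ball is covered by A and its reflection
  have hcover : ball ((3/4 : ℝ) • ξ) r ⊆ A ∪ ((fun z => (2 : ℝ) • y - z) ⁻¹' A) := by
    intro z hz
    rw [mem_ball] at hz
    have hz34 : ‖z - ((1 : ℝ) * (3/4)) • ξ‖ ≤ (1 - δ) / 25 := by
      rw [one_mul, ← dist_eq_norm]
      rw [hr_def] at hz
      linarith [hz]
    obtain ⟨hzS, hzball⟩ := hSmem z 1 (Or.inl rfl) hz34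
    set w : EuclideanSpace ℝ (Fin n) := (2 : ℝ) • y - z with hwdef
    clear_value w
    have hw34 : ‖w - ((-1 : ℝ) * (3/4)) • ξ‖ ≤ (1 - δ) / 25 := by
      have heq : w - ((-1 : ℝ) * (3/4)) • ξ = (2 : ℝ) • y - (z - ((1:ℝ) * (3/4)) • ξ) := by
        rw [hwdef]
        simp only [neg_one_mul, neg_smul, one_mul]
        abel
      rw [heq]
      calc ‖(2 : ℝ) • y - (z - ((1:ℝ) * (3/4)) • ξ)‖
          ≤ ‖(2 : ℝ) • y‖ + ‖z - ((1:ℝ) * (3/4)) • ξ‖ := norm_sub_le _ _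
        _ ≤ 2 * l + (1 - δ) / 50 := by
            rw [norm_smul, Real.norm_eq_abs]
            have : |(2 : ℝ)| = 2 := by norm_num
            rw [this]
            have h25 : ‖z - ((1:ℝ) * (3/4)) • ξ‖ ≤ (1 - δ) / 50 := by
              rw [one_mul, ← dist_eq_norm]; rw [hr_def] at hz; linarith
            linarith
        _ ≤ (1 - δ) / 25 := by rw [hl_def]; linarith
    obtain ⟨hwS, hwball⟩ := hSmem w (-1) (Or.inr rfl) hw34
    have hmid : ((1 : ℝ)/2) • z + ((1 : ℝ)/2) • w = y := by
      rw [hwdef]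
      module
    by_cases hzb : b < f z
    · left
      rw [hAdef]
      refine ⟨hzS, ?_⟩
      simp only [hfdef] at hzb
      rw [← key] at hzb
      linarith
    · right
      push_neg at hzb
      have hconvineq := hfconv.2 hzball hwball (by norm_num : (0:ℝ) ≤ 1/2)
        (by norm_num : (0:ℝ) ≤ 1/2) (by norm_num)
      rw [hmid] at hconvineq
      simp only [smul_eq_mul] at hconvineq
      have hwb : b < f w := by
        have h3 : b < 1 / 2 * f z + 1 / 2 * f w := lt_of_lt_of_le hby hconvineq
        linarith [h3, hzb]
      rw [Set.mem_preimage, ← hwdef]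
      show w ∈ A
      rw [hAdef]
      refine ⟨hwS, ?_⟩
      simp only [hfdef] at hwb
      rw [← key] at hwb
      linarith
  -- measure estimates
  have hpre : volume ((fun z : EuclideanSpace ℝ (Fin n) => (2 : ℝ) • y - z) ⁻¹' A) = volume A := by
    have heq : (fun z : EuclideanSpace ℝ (Fin n) => (2 : ℝ) • y - z) ⁻¹' A
        = Neg.neg ⁻¹' ((fun z : EuclideanSpace ℝ (Fin n) => (2 : ℝ) • y + z) ⁻¹' A) := by
      ext z
      simp [sub_eq_add_neg]
    rw [heq, Measure.measure_preimage_neg, measure_preimage_add]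
  have hupper : volume A ≤ ENNReal.ofReal (r ^ n / 4) * volume (ball (0 : EuclideanSpace ℝ (Fin n)) 1) := by
    refine hmeas.trans ?_
    refine mul_le_mul_right (measure_mono ?_) _
    exact (inter_subset_left).trans diff_subset
  have hlower : ENNReal.ofReal (r ^ n) * volume (ball (0 : EuclideanSpace ℝ (Fin n)) 1)
      ≤ volume A + volume A := by
    have hballvol : volume (ball ((3/4 : ℝ) • ξ) r)
        = ENNReal.ofReal (r ^ n) * volume (ball (0 : EuclideanSpace ℝ (Fin n)) 1) := by
      rw [Measure.addHaar_ball _ _ hr0.le, finrank_euclideanSpace_fin]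
    calc ENNReal.ofReal (r ^ n) * volume (ball (0 : EuclideanSpace ℝ (Fin n)) 1)
        = volume (ball ((3/4 : ℝ) • ξ) r) := hballvol.symm
      _ ≤ volume (A ∪ ((fun z : EuclideanSpace ℝ (Fin n) => (2 : ℝ) • y - z) ⁻¹' A)) := measure_mono hcover
      _ ≤ volume A + volume ((fun z : EuclideanSpace ℝ (Fin n) => (2 : ℝ) • y - z) ⁻¹' A) := measure_union_le _ _
      _ = volume A + volume A := by rw [hpre]
  have hV0 : volume (ball (0 : EuclideanSpace ℝ (Fin n)) 1) ≠ 0 := (measure_ball_pos _ _ one_pos).ne'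
  have hVtop : volume (ball (0 : EuclideanSpace ℝ (Fin n)) 1) ≠ ⊤ := measure_ball_lt_top.ne
  have hfinal : ENNReal.ofReal (r ^ n) * volume (ball (0 : EuclideanSpace ℝ (Fin n)) 1)
      ≤ ENNReal.ofReal (r ^ n / 2) * volume (ball (0 : EuclideanSpace ℝ (Fin n)) 1) := by
    calc ENNReal.ofReal (r ^ n) * volume (ball (0 : EuclideanSpace ℝ (Fin n)) 1)
        ≤ volume A + volume A := hlower
      _ ≤ ENNReal.ofReal (r ^ n / 4) * volume (ball (0 : EuclideanSpace ℝ (Fin n)) 1)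
          + ENNReal.ofReal (r ^ n / 4) * volume (ball (0 : EuclideanSpace ℝ (Fin n)) 1) := add_le_add hupper hupper
      _ = (ENNReal.ofReal (r ^ n / 4) + ENNReal.ofReal (r ^ n / 4)) * volume (ball (0 : EuclideanSpace ℝ (Fin n)) 1) := by
          rw [add_mul]
      _ = ENNReal.ofReal (r ^ n / 2) * volume (ball (0 : EuclideanSpace ℝ (Fin n)) 1) := by
          rw [← ENNReal.ofReal_add (by positivity) (by positivity),
            show r ^ n / 4 + r ^ n / 4 = r ^ n / 2 by ring]
  have hle : ENNReal.ofReal (r ^ n) ≤ ENNReal.ofReal (r ^ n / 2) :=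
    (ENNReal.mul_le_mul_iff_left hV0 hVtop).mp hfinal
  rw [ENNReal.ofReal_le_ofReal_iff (by positivity)] at hle
  have hrn : 0 < r ^ n := by positivity
  linarith
end
end

section
/- Fix δ ∈ (0,1). There exists μ₁ > 0, depending only on n and δ, such that for every ξ ∈ 𝕊^{n−1}, ∫_{𝕊^{n−1}} z₁² · 𝟙_{V_ξ}(z) dS(z) ≥ μ₁, where V_ξ = {z ∈ ℝⁿ : |⟨z/|z|, ξ⟩| ≥ δ} and z₁ is the first coordinate of z. -/
set_option maxHeartbeats 1000000
set_option linter.unusedVariables false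
set_option linter.unusedSectionVars false
set_option linter.unnecessarySimpa false

open Metric Set MeasureTheory
open scoped RealInnerProductSpace

noncomputable section

open Module in
private lemma sqrt_aux' {s : ℝ} (h0 : 0 ≤ s) (h1 : s ≤ 1) :
    ∃ t:ℝ, 0 ≤ t ∧ t^2 = 1 - s ∧ 1 - s ≤ t ∧ t ≤ 1 := by
  have hs : (0:ℝ) ≤ 1 - s := by linarith
  refine ⟨Real.sqrt (1-s), Real.sqrt_nonneg _, Real.sq_sqrt hs, ?_, ?_⟩
  · exact Real.le_sqrt_of_sq_le (by nlinarith)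
  · nlinarith [Real.sq_sqrt hs, Real.sqrt_nonneg (1-s)]

section Aux

open Module
open scoped ENNReal NNReal

variable {E : Type*} [NormedAddCommGroup E] [InnerProductSpace ℝ E]
  [FiniteDimensional ℝ E] [MeasurableSpace E] [BorelSpace E]

private lemma cap_pos' {n : ℕ} (hn : 2 ≤ n) (hE : finrank ℝ E = n) (c : E) (hc : ‖c‖ = 1)
    {r : ℝ} (hr : 0 < r) (hr1 : r ≤ 1) :
    0 < μH[(n:ℝ)-1] (sphere (0 : E) 1 ∩ ball c r) := by
  have hn1 : (1:ℝ) ≤ (n:ℝ) := by exact_mod_cast (by omega : 1 ≤ n)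
  have hd0 : (0:ℝ) ≤ (n:ℝ) - 1 := by linarith
  set H : Submodule ℝ E := (ℝ ∙ c)ᗮ with hH
  have hc0 : c ≠ 0 := by intro h; rw [h] at hc; simp at hc
  have hdim : finrank ℝ H = n - 1 := by
    haveI : Fact (finrank ℝ E = (n-1) + 1) := ⟨by rw [hE]; omega⟩
    exact Submodule.finrank_orthogonal_span_singleton hc0
  have hcast : ((n:ℝ) - 1) = ((finrank ℝ H : ℕ) : ℝ) := by
    rw [hdim]; push_cast [Nat.cast_sub (by omega : 1 ≤ n)]; ring
  haveI : Measure.IsAddHaarMeasure (μH[(n:ℝ)-1] : Measure H) := by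
    rw [hcast]; infer_instance
  set π := H.orthogonalProjectionOnto with hπ
  have hsub : ball (0:H) (r/4) ⊆ π '' (sphere (0 : E) 1 ∩ ball c r) := by
    intro v hv
    rw [mem_ball, dist_zero_right] at hv
    have hv1 : ‖v‖ < 1 := by linarith
    have hv0 : (0:ℝ) ≤ ‖v‖ := norm_nonneg _
    obtain ⟨t, htnn, ht2, h1t, ht1⟩ := sqrt_aux' (s := ‖v‖^2) (by positivity) (by nlinarith)
    have hcoe : ‖(v:E)‖ = ‖v‖ := rfl
    have hperp : ⟪c, (v:E)⟫ = 0 := v.2 c (Submodule.mem_span_singleton_self c)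
    refine ⟨t • c + (v:E), ⟨?_, ?_⟩, ?_⟩
    · rw [mem_sphere_iff_norm, sub_zero]
      have hsq : ‖t • c + (v:E)‖^2 = 1 := by
        rw [norm_add_sq_real, real_inner_smul_left, hperp, norm_smul,
          Real.norm_eq_abs, abs_of_nonneg htnn, hc]
        nlinarith
      nlinarith [norm_nonneg (t • c + (v:E))]
    · rw [mem_ball, dist_eq_norm]
      have heq : t • c + (v:E) - c = (t-1) • c + (v:E) := by
        rw [sub_smul, one_smul]; abel
      rw [heq]
      have hsq : ‖(t-1) • c + (v:E)‖^2 = (t-1)^2 + ‖v‖^2 := by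
        rw [norm_add_sq_real, real_inner_smul_left, hperp, norm_smul,
          Real.norm_eq_abs, hc]
        simp only [hcoe, sq_abs, mul_one, mul_zero]; ring
      have hlt : ‖(t-1) • c + (v:E)‖^2 < r^2 := by rw [hsq]; nlinarith
      nlinarith [norm_nonneg ((t-1) • c + (v:E))]
    · have h1 : π (v:E) = v := Submodule.orthogonalProjection_mem_subspace_eq_self v
      have h2 : π c = 0 := Submodule.orthogonalProjection_orthogonalComplement_singleton_eq_zero c
      rw [map_add, π.map_smul, h1, h2, smul_zero, zero_add]
  have hlip : LipschitzWith 1 π :=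
    H.orthogonalProjectionOnto.lipschitz.weaken (by rw [← NNReal.coe_le_coe, coe_nnnorm, NNReal.coe_one]; exact Submodule.orthogonalProjection_norm_le H)
  have key := hlip.hausdorffMeasure_image_le hd0 (sphere (0 : E) 1 ∩ ball c r)
  have hball : 0 < (μH[(n:ℝ)-1] : Measure H) (ball 0 (r/4)) :=
    isOpen_ball.measure_pos _ ⟨0, by simp [hr]⟩
  calc (0:ENNReal) < (μH[(n:ℝ)-1] : Measure H) (ball 0 (r/4)) := hball
    _ ≤ (μH[(n:ℝ)-1] : Measure H) (π '' _) := measure_mono hsub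
    _ ≤ _ := by simpa using key

private lemma cap_fin' {n : ℕ} (hn : 2 ≤ n) (hE : finrank ℝ E = n) (x : E) (hx : ‖x‖ = 1) :
    μH[(n:ℝ)-1] (sphere (0 : E) 1 ∩ ball x (1/2)) < ⊤ := by
  have hn1 : (1:ℝ) ≤ (n:ℝ) := by exact_mod_cast (by omega : 1 ≤ n)
  have hd0 : (0:ℝ) ≤ (n:ℝ) - 1 := by linarith
  set H : Submodule ℝ E := (ℝ ∙ x)ᗮ with hH
  have hc0 : x ≠ 0 := by intro h; rw [h] at hx; simp at hx
  have hdim : finrank ℝ H = n - 1 := by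
    haveI : Fact (finrank ℝ E = (n-1) + 1) := ⟨by rw [hE]; omega⟩
    exact Submodule.finrank_orthogonal_span_singleton hc0
  have hcast : ((n:ℝ) - 1) = ((finrank ℝ H : ℕ) : ℝ) := by
    rw [hdim]; push_cast [Nat.cast_sub (by omega : 1 ≤ n)]; ring
  haveI : Measure.IsAddHaarMeasure (μH[(n:ℝ)-1] : Measure H) := by
    rw [hcast]; infer_instance
  set f : H → E := fun v => Real.sqrt (1 - ‖v‖^2) • x + (v:E) with hf
  set A : Set H := closedBall 0 (Real.sqrt (1/2)) with hA
  have hsub : sphere (0 : E) 1 ∩ ball x (1/2) ⊆ f '' A := by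
    rintro z ⟨hz1, hz2⟩
    rw [mem_sphere_iff_norm, sub_zero] at hz1
    rw [mem_ball, dist_eq_norm] at hz2
    have ht : ⟪x, z⟫ = 1 - ‖z - x‖^2/2 := by
      have := norm_sub_sq_real z x
      rw [hz1, hx, real_inner_comm] at this
      linarith
    have ht78 : (7:ℝ)/8 < ⟪x, z⟫ := by rw [ht]; nlinarith [norm_nonneg (z-x)]
    set t : ℝ := ⟪x, z⟫ with htd
    have hv : z - t • x ∈ H := by
      rw [hH, Submodule.mem_orthogonal_singleton_iff_inner_right]
      rw [inner_sub_right, real_inner_smul_right, real_inner_self_eq_norm_sq, hx]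
      simp [htd]
    have hnv : ‖z - t • x‖^2 = 1 - t^2 := by
      rw [norm_sub_sq_real, real_inner_smul_right, norm_smul, Real.norm_eq_abs, hx, hz1]
      have hzx : ⟪z,x⟫ = t := by rw [real_inner_comm]
      simp only [hzx, mul_one, sq_abs]; ring
    have hnv2 : ‖z - t • x‖^2 ≤ 1/2 := by rw [hnv]; nlinarith
    refine ⟨⟨z - t • x, hv⟩, ?_, ?_⟩
    · rw [hA, mem_closedBall, dist_zero_right]
      have : ‖(⟨z - t • x, hv⟩ : H)‖ = ‖z - t • x‖ := rfl
      rw [this]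
      exact Real.le_sqrt_of_sq_le (by linarith [hnv2])
    · rw [hf]
      have hcoe : ‖(⟨z - t • x, hv⟩ : H)‖ = ‖z - t • x‖ := rfl
      simp only [hcoe]
      have : Real.sqrt (1 - ‖z - t • x‖^2) = t := by
        rw [hnv]
        have : (1:ℝ) - (1 - t^2) = t^2 := by ring
        rw [this, Real.sqrt_sq (by linarith)]
      rw [this]
      simp
  have hlip : LipschitzOnWith 2 f A := by
    apply LipschitzOnWith.of_dist_le_mul
    intro v hv w hw
    rw [hA, mem_closedBall, dist_zero_right] at hv hw
    have hv2 : ‖v‖^2 ≤ 1/2 := by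
      nlinarith [Real.sq_sqrt (by norm_num : (0:ℝ) ≤ 1/2), norm_nonneg v, Real.sqrt_nonneg (1/2:ℝ)]
    have hw2 : ‖w‖^2 ≤ 1/2 := by
      nlinarith [Real.sq_sqrt (by norm_num : (0:ℝ) ≤ 1/2), norm_nonneg w, Real.sqrt_nonneg (1/2:ℝ)]
    set a := Real.sqrt (1 - ‖v‖^2) with ha
    set b := Real.sqrt (1 - ‖w‖^2) with hb
    have ha2 : a^2 = 1 - ‖v‖^2 := Real.sq_sqrt (by nlinarith)
    have hb2 : b^2 = 1 - ‖w‖^2 := Real.sq_sqrt (by nlinarith)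
    have ha0 : 0 ≤ a := Real.sqrt_nonneg _
    have hb0 : 0 ≤ b := Real.sqrt_nonneg _
    have hperp : ⟪x, ((v:E) - (w:E))⟫ = 0 := by
      have h1 : ⟪x, (v:E)⟫ = 0 := Submodule.mem_orthogonal_singleton_iff_inner_right.mp v.2
      have h2 : ⟪x, (w:E)⟫ = 0 := Submodule.mem_orthogonal_singleton_iff_inner_right.mp w.2
      rw [inner_sub_right, h1, h2]; ring
    have hdiff : f v - f w = (a - b) • x + ((v:E) - (w:E)) := by
      rw [hf]; simp only [← ha, ← hb]
      rw [sub_smul]; abel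
    have hnorm : ‖f v - f w‖^2 = (a-b)^2 + ‖(v:E) - (w:E)‖^2 := by
      rw [hdiff, norm_add_sq_real, real_inner_smul_left, hperp, norm_smul,
        Real.norm_eq_abs, hx]
      simp only [mul_one, mul_zero, sq_abs]
      ring
    have hdist : dist v w = ‖(v:E) - (w:E)‖ := by rw [Subtype.dist_eq, dist_eq_norm]
    rw [dist_eq_norm, hdist]
    have hne : |‖v‖ - ‖w‖| ≤ ‖(v:E) - (w:E)‖ := by
      have h1 : ‖(v:E)‖ = ‖v‖ := rfl
      have h2 : ‖(w:E)‖ = ‖w‖ := rfl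
      rw [← h1, ← h2]
      exact abs_norm_sub_norm_le _ _
    have hab2 : (a-b)^2 ≤ 2 * ‖(v:E) - (w:E)‖^2 := by
      have hsum : 1 ≤ (a+b)^2 := by nlinarith
      have h1 : (a-b)^2 * (a+b)^2 = (‖w‖^2 - ‖v‖^2)^2 := by nlinarith
      have h2 : (‖w‖^2 - ‖v‖^2)^2 ≤ 2 * ‖(v:E) - (w:E)‖^2 := by
        have habs := abs_nonneg (‖v‖ - ‖w‖)
        have := sq_abs (‖v‖ - ‖w‖)
        nlinarith [norm_nonneg v, norm_nonneg w, norm_nonneg ((v:E) - (w:E)), hne]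
      nlinarith [sq_nonneg (a-b), norm_nonneg ((v:E) - (w:E))]
    have hfin2 : ‖f v - f w‖^2 ≤ (2 * ‖(v:E) - (w:E)‖)^2 := by
      rw [hnorm]; nlinarith [norm_nonneg ((v:E) - (w:E))]
    have h2n : (0:ℝ) ≤ 2 * ‖(v:E) - (w:E)‖ := by positivity
    have hfinal : ‖f v - f w‖ ≤ 2 * ‖(v:E) - (w:E)‖ := by
      nlinarith [norm_nonneg (f v - f w)]
    simpa using hfinal
  have key := hlip.hausdorffMeasure_image_le hd0
  have hAfin : (μH[(n:ℝ)-1] : Measure H) A < ⊤ := (isCompact_closedBall 0 _).measure_lt_top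
  calc μH[(n:ℝ)-1] (sphere (0 : E) 1 ∩ ball x (1/2)) ≤ μH[(n:ℝ)-1] (f '' A) := measure_mono hsub
    _ ≤ ((2:ℝ≥0) : ℝ≥0∞) ^ ((n:ℝ)-1) * (μH[(n:ℝ)-1] : Measure H) A := key
    _ < ⊤ := ENNReal.mul_lt_top (ENNReal.rpow_lt_top_of_nonneg hd0 ENNReal.coe_ne_top) hAfin

private lemma sphere_fin' {n : ℕ} (hn : 2 ≤ n) (hE : finrank ℝ E = n) :
    μH[(n:ℝ)-1] (sphere (0 : E) 1) < ⊤ := by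
  have hcomp : IsCompact (sphere (0 : E) 1) := isCompact_sphere 0 1
  obtain ⟨s, hs⟩ := hcomp.elim_finite_subcover
    (fun x : sphere (0:E) 1 => ball (x:E) (1/2)) (fun x => isOpen_ball)
    (fun z hz => mem_iUnion.mpr ⟨⟨z, hz⟩, mem_ball_self (by norm_num)⟩)
  calc μH[(n:ℝ)-1] (sphere (0 : E) 1)
      = μH[(n:ℝ)-1] (⋃ x ∈ s, sphere (0:E) 1 ∩ ball (x:E) (1/2)) := by
        congr 1
        rw [← Set.inter_iUnion₂]
        exact (Set.inter_eq_left.mpr hs).symm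
    _ ≤ ∑ x ∈ s, μH[(n:ℝ)-1] (sphere (0:E) 1 ∩ ball (x:E) (1/2)) := measure_biUnion_finset_le s _
    _ < ⊤ := by
        apply ENNReal.sum_lt_top.mpr
        intro x _
        exact cap_fin' hn hE x (by simpa [mem_sphere_iff_norm] using x.2)

private lemma cap_congr' {n : ℕ} (x y : E) (hx : ‖x‖ = 1) (hy : ‖y‖ = 1) (r : ℝ) :
    μH[(n:ℝ)-1] (sphere (0:E) 1 ∩ ball y r) = μH[(n:ℝ)-1] (sphere (0:E) 1 ∩ ball x r) := by
  set R := Submodule.reflection (ℝ ∙ (x - y))ᗮ with hRdef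
  have hR : R x = y := Submodule.reflection_sub (by rw [hx, hy])
  have himg : R '' (sphere (0:E) 1 ∩ ball x r) = sphere (0:E) 1 ∩ ball y r := by
    rw [Set.image_inter R.injective]
    have h1 := R.toIsometryEquiv.image_sphere 0 1
    have h2 := R.toIsometryEquiv.image_ball x r
    simp only [LinearIsometryEquiv.coe_toIsometryEquiv] at h1 h2
    rw [h1, h2, map_zero, hR]
  rw [← himg, R.isometry.hausdorffMeasure_image (Or.inr R.surjective)]

end Aux

theorem stmt_6 {n : ℕ} (hn : 2 ≤ n) (δ : ℝ) (hδ : δ ∈ Set.Ioo (0 : ℝ) 1) :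
    ∃ μ₁ > (0 : ℝ), ∀ ξ : EuclideanSpace ℝ (Fin n), ‖ξ‖ = 1 →
      μ₁ ≤ ∫ z in Metric.sphere (0 : EuclideanSpace ℝ (Fin n)) 1,
        (secCone δ ξ).indicator (fun z => (z (⟨0, by omega⟩ : Fin n)) ^ 2) z
        ∂(μH[(n : ℝ) - 1]) := by
  obtain ⟨hδ0, hδ1⟩ := hδ
  have hE : Module.finrank ℝ (EuclideanSpace ℝ (Fin n)) = n := by simp
  set i0 : Fin n := ⟨0, by omega⟩ with hi0
  set e₀ : EuclideanSpace ℝ (Fin n) := EuclideanSpace.single i0 1 with he₀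
  have he₀n : ‖e₀‖ = 1 := by rw [he₀, EuclideanSpace.norm_single]; norm_num
  set c₀ : ℝ := (1 - δ)/2 with hc₀def
  have hc₀ : 0 < c₀ := by rw [hc₀def]; linarith
  set dp : ℝ := 1/(1 + c₀) with hdp
  have hdpδ : δ < dp := by
    rw [hdp, hc₀def]
    rw [lt_div_iff₀ (by linarith)]
    nlinarith
  have hdp1 : dp ≤ 1 := by
    rw [hdp, div_le_one (by linarith)]; linarith
  set ε : ℝ := c₀/(2*(1 + c₀)) with hε
  have hε0 : 0 < ε := by rw [hε]; positivity
  have hε1 : ε ≤ 1 := by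
    rw [hε, div_le_one (by linarith)]; linarith
  set r : ℝ := min (dp - δ) ε with hr
  have hr0 : 0 < r := lt_min (by linarith) hε0
  have hr1 : r ≤ 1 := le_trans (min_le_right _ _) hε1
  have hrε : r ≤ ε := min_le_right _ _
  have hrδ : r ≤ dp - δ := min_le_left _ _
  set S : Set (EuclideanSpace ℝ (Fin n)) := Metric.sphere 0 1 with hS
  set μ : Measure (EuclideanSpace ℝ (Fin n)) := μH[(n : ℝ) - 1] with hμ
  set m : ENNReal := μ (S ∩ ball e₀ r) with hm
  have hm0 : 0 < m := cap_pos' hn hE e₀ he₀n hr0 hr1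
  have hSfin : μ S < ⊤ := sphere_fin' hn hE
  have hmfin : m < ⊤ := lt_of_le_of_lt (measure_mono inter_subset_left) hSfin
  have hmtR : 0 < m.toReal := ENNReal.toReal_pos hm0.ne' hmfin.ne
  refine ⟨ε^2 * m.toReal, by positivity, ?_⟩
  intro ξ hξ
  -- construct the cap center
  set t : ℝ := ⟪ξ, e₀⟫ with ht
  have htle : |t| ≤ 1 := by
    rw [ht]
    calc |⟪ξ, e₀⟫| ≤ ‖ξ‖ * ‖e₀‖ := abs_real_inner_le_norm ξ e₀
      _ = 1 := by rw [hξ, he₀n]; ring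
  set s : ℝ := if 0 ≤ t then 1 else -1 with hs
  have hst : s * t = |t| := by
    rw [hs]; by_cases h : 0 ≤ t
    · simp [h, abs_of_nonneg h]
    · simp [h, abs_of_neg (lt_of_not_ge h)]
  have hs2 : s^2 = 1 := by rw [hs]; by_cases h : 0 ≤ t <;> simp [h]
  set w : EuclideanSpace ℝ (Fin n) := ξ + (s*c₀) • e₀ with hw
  have hN2 : ‖w‖^2 = 1 + 2*c₀*|t| + c₀^2 := by
    rw [hw, norm_add_sq_real, real_inner_smul_right, norm_smul, Real.norm_eq_abs,
      abs_mul, hξ, he₀n, ← ht]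
    have h1 : s * c₀ * t = c₀ * |t| := by rw [mul_comm s c₀, mul_assoc, hst]
    have h2 : (|s| * |c₀| * 1)^2 = c₀^2 := by
      rw [mul_one, mul_pow, sq_abs, sq_abs, hs2, one_mul]
    rw [h1, h2]; ring
  have hNpos : 0 < ‖w‖ := by
    nlinarith [norm_nonneg w, abs_nonneg t, sq_nonneg (‖w‖ - 1)]
  have hNle : ‖w‖ ≤ 1 + c₀ := by nlinarith [norm_nonneg w]
  set z₀ : EuclideanSpace ℝ (Fin n) := ‖w‖⁻¹ • w with hz₀
  have hz₀n : ‖z₀‖ = 1 := by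
    rw [hz₀, norm_smul, Real.norm_eq_abs, abs_of_nonneg (by positivity)]
    field_simp
  have hz₀S : z₀ ∈ S := by rw [hS, mem_sphere_iff_norm, sub_zero]; exact hz₀n
  have hwξ : ⟪w, ξ⟫ = 1 + c₀*|t| := by
    have hcomm : ⟪e₀, ξ⟫ = t := by rw [real_inner_comm]
    rw [hw, inner_add_left, real_inner_smul_left, real_inner_self_eq_norm_sq, hξ, hcomm]
    rw [show s * c₀ * t = c₀ * |t| by rw [mul_comm s c₀, mul_assoc, hst]]
    ring
  have hwe : ⟪w, e₀⟫ = t + s*c₀ := by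
    have hcomm : ⟪ξ, e₀⟫ = t := ht.symm
    rw [hw, inner_add_left, real_inner_smul_left, real_inner_self_eq_norm_sq, he₀n, hcomm]
    ring
  have hz₀ξ : dp ≤ ⟪z₀, ξ⟫ := by
    rw [hz₀, real_inner_smul_left, hwξ]
    have h1 : (0:ℝ) < 1 + c₀ := by linarith
    have hkey : dp * ‖w‖ ≤ 1 + c₀*|t| := by
      have : dp * ‖w‖ ≤ dp * (1 + c₀) := by
        apply mul_le_mul_of_nonneg_left hNle (by rw [hdp]; positivity)
      have h2 : dp * (1 + c₀) = 1 := by rw [hdp]; field_simp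
      nlinarith [abs_nonneg t]
    calc dp = (dp * ‖w‖) * ‖w‖⁻¹ := by field_simp
      _ ≤ (1 + c₀*|t|) * ‖w‖⁻¹ := mul_le_mul_of_nonneg_right hkey (by positivity)
      _ = ‖w‖⁻¹ * (1 + c₀*|t|) := by ring
  have habs : |t + s*c₀| = |t| + c₀ := by
    rw [hs]
    by_cases h : 0 ≤ t
    · simp only [if_pos h, one_mul]
      rw [abs_of_nonneg (by linarith), abs_of_nonneg h]
    · have h' : t < 0 := lt_of_not_ge h
      simp only [if_neg h, neg_one_mul]
      rw [abs_of_neg h']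
      rw [show t + -c₀ = -(c₀ - t) by ring, abs_neg, abs_of_nonneg (by linarith)]
      ring
  have hz₀e : 2*ε ≤ |⟪z₀, e₀⟫| := by
    rw [hz₀, real_inner_smul_left, hwe, abs_mul, abs_of_nonneg (by positivity : (0:ℝ) ≤ ‖w‖⁻¹),
      habs]
    have h1 : (0:ℝ) < 1 + c₀ := by linarith
    have h2 : 2*ε * (1+c₀) = c₀ := by rw [hε]; field_simp
    have hkey : 2*ε * ‖w‖ ≤ |t| + c₀ := by
      have : 2*ε * ‖w‖ ≤ 2*ε * (1 + c₀) := by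
        apply mul_le_mul_of_nonneg_left hNle (by positivity)
      nlinarith [abs_nonneg t]
    calc 2*ε = (2*ε * ‖w‖) * ‖w‖⁻¹ := by field_simp
      _ ≤ (|t| + c₀) * ‖w‖⁻¹ := mul_le_mul_of_nonneg_right hkey (by positivity)
      _ = ‖w‖⁻¹ * (|t| + c₀) := by ring
  -- the cap is inside the cone with lower bound on the coordinate
  set T : Set (EuclideanSpace ℝ (Fin n)) := S ∩ ball z₀ r with hT
  have hTsub : ∀ z ∈ T, z ∈ secCone δ ξ ∧ ε^2 ≤ (z i0)^2 := by
    rintro z ⟨hz1, hz2⟩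
    rw [hS, mem_sphere_iff_norm, sub_zero] at hz1
    rw [mem_ball, dist_eq_norm] at hz2
    have hzi : z i0 = ⟪z, e₀⟫ := by
      rw [he₀, EuclideanSpace.inner_single_right]; simp
    have hdξ : |⟪z - z₀, ξ⟫| ≤ ‖z - z₀‖ := by
      calc |⟪z - z₀, ξ⟫| ≤ ‖z - z₀‖ * ‖ξ‖ := abs_real_inner_le_norm _ _
        _ = ‖z - z₀‖ := by rw [hξ, mul_one]
    have hde : |⟪z - z₀, e₀⟫| ≤ ‖z - z₀‖ := by
      calc |⟪z - z₀, e₀⟫| ≤ ‖z - z₀‖ * ‖e₀‖ := abs_real_inner_le_norm _ _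
        _ = ‖z - z₀‖ := by rw [he₀n, mul_one]
    have hsplitξ : ⟪z, ξ⟫ = ⟪z₀, ξ⟫ + ⟪z - z₀, ξ⟫ := by
      rw [inner_sub_left]; ring
    have hsplite : ⟪z, e₀⟫ = ⟪z₀, e₀⟫ + ⟪z - z₀, e₀⟫ := by
      rw [inner_sub_left]; ring
    constructor
    · show δ * ‖z‖ ≤ |⟪z, ξ⟫|
      rw [hz1, mul_one]
      have : δ ≤ ⟪z, ξ⟫ := by
        rw [hsplitξ]
        have := abs_le.mp hdξ
        linarith [hz₀ξ, this.1]
      exact le_trans this (le_abs_self _)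
    · rw [hzi]
      have hεabs : ε ≤ |⟪z, e₀⟫| := by
        have h1 : |⟪z₀, e₀⟫| - |⟪z - z₀, e₀⟫| ≤ |⟪z, e₀⟫| := by
          rw [hsplite]
          have h0 := abs_add_le (⟪z₀, e₀⟫ + ⟪z - z₀, e₀⟫) (-(⟪z - z₀, e₀⟫))
          rw [add_neg_cancel_right, abs_neg] at h0
          linarith
        linarith
      calc ε^2 ≤ |⟪z, e₀⟫|^2 := by
            apply pow_le_pow_left₀ (le_of_lt hε0) hεabs
        _ = ⟪z, e₀⟫^2 := sq_abs _
  -- measure of the cap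
  have hSmeas : MeasurableSet S := isClosed_sphere.measurableSet
  have hTmeas : MeasurableSet T := hSmeas.inter measurableSet_ball
  have hμT : μ T = m := by
    rw [hT, hm, hμ, hS]
    exact cap_congr' e₀ z₀ he₀n hz₀n r
  haveI : IsFiniteMeasure (μ.restrict S) :=
    ⟨by rw [Measure.restrict_apply_univ]; exact hSfin⟩
  -- integral estimate
  set g : EuclideanSpace ℝ (Fin n) → ℝ := fun z => (z i0)^2 with hg
  set f : EuclideanSpace ℝ (Fin n) → ℝ := fun z => (secCone δ ξ).indicator g z with hfdef
  have hconem : MeasurableSet (secCone δ ξ) := by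
    have : secCone δ ξ = {z : EuclideanSpace ℝ (Fin n) | δ * ‖z‖ ≤ |⟪z, ξ⟫|} := rfl
    rw [this]
    exact measurableSet_le (measurable_const.mul measurable_norm)
      ((continuous_id.inner continuous_const).abs).measurable
  have hgcont : Continuous g := ((EuclideanSpace.proj (𝕜 := ℝ) i0).continuous).pow 2
  have hfmeas : Measurable f := hgcont.measurable.indicator hconem
  have hbound : ∀ᵐ z ∂(μ.restrict S), ‖f z‖ ≤ 1 := by
    refine (ae_restrict_iff' hSmeas).mpr (ae_of_all _ ?_)
    intro z hz
    rw [hS, mem_sphere_iff_norm, sub_zero] at hz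
    have hzi : z i0 = ⟪z, e₀⟫ := by
      rw [he₀, EuclideanSpace.inner_single_right]; simp
    rw [Real.norm_eq_abs]
    by_cases hc : z ∈ secCone δ ξ
    · rw [hfdef]
      simp only [indicator_of_mem hc]
      rw [hg]
      simp only [hzi]
      rw [abs_of_nonneg (sq_nonneg _)]
      have h1 : |⟪z, e₀⟫| ≤ 1 := by
        calc |⟪z, e₀⟫| ≤ ‖z‖ * ‖e₀‖ := abs_real_inner_le_norm _ _
          _ = 1 := by rw [hz, he₀n]; ring
      nlinarith [abs_nonneg (⟪z, e₀⟫), sq_abs (⟪z, e₀⟫)]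
    · rw [hfdef]
      simp [indicator_of_notMem hc]
  have hfint : Integrable f (μ.restrict S) :=
    Integrable.mono' (integrable_const 1) hfmeas.aestronglyMeasurable hbound
  have hgint : Integrable (T.indicator fun _ => ε^2) (μ.restrict S) := by
    rw [integrable_indicator_iff hTmeas]
    exact (integrableOn_const_iff).mpr (Or.inr (measure_lt_top _ _))
  have hmono : ∀ z, T.indicator (fun _ => ε^2) z ≤ f z := by
    intro z
    by_cases hzT : z ∈ T
    · rw [indicator_of_mem hzT]
      obtain ⟨hcone, hsq⟩ := hTsub z hzT
      rw [hfdef]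
      simp only [indicator_of_mem hcone]
      exact hsq
    · rw [indicator_of_notMem hzT]
      exact indicator_nonneg (fun a _ => sq_nonneg _) z
  have hcalc : ε^2 * m.toReal ≤ ∫ z, f z ∂(μ.restrict S) := by
    calc ε^2 * m.toReal = ((μ.restrict S) T).toReal • (ε^2) := by
          rw [Measure.restrict_apply hTmeas, inter_eq_left.mpr inter_subset_left, hμT,
            smul_eq_mul]
          ring
      _ = ∫ z, T.indicator (fun _ => ε^2) z ∂(μ.restrict S) := by
          rw [integral_indicator_const (ε^2) hTmeas]; rfl
      _ ≤ ∫ z, f z ∂(μ.restrict S) := integral_mono hgint hfint hmono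
  exact hcalc
end
end

section
/- Let p > 0 and let f(y) = |y|^{−p} for |y| ≥ 1 − C₄/2 (part of the radial function f̂). For h ∈ ℝⁿ with |h| < C₄/2 ≤ 1/2, the second difference at e₁ satisfies δ²_h f(e₁) = |e₁+h|^{−p} + |e₁−h|^{−p} − 2 ≥ p( −|h|² + (p+2)h₁² − (1/2)(p+2)(p+4) h₁² |h|² ). -/
open Metric Set

noncomputable section

-- Level 1: Bernoulli for negative exponents, via weighted AM-GM
lemma bern_neg {q t : ℝ} (hq : 0 < q) (ht : -1 < t) : 1 - q * t ≤ (1 + t) ^ (-q) := by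
  have hx : (0:ℝ) < 1 + t := by linarith
  have hq1 : (0:ℝ) < 1 + q := by linarith
  have h1 : ((1+t) ^ (-q)) ^ ((1:ℝ)/(1+q)) * (1+t) ^ (q/(1+q))
      ≤ (1/(1+q)) * ((1+t) ^ (-q)) + (q/(1+q)) * (1+t) :=
    Real.geom_mean_le_arith_mean2_weighted (by positivity) (by positivity)
      (Real.rpow_nonneg hx.le _) hx.le (by rw [← add_div, div_self (by linarith : (1:ℝ)+q ≠ 0)])
  rw [← Real.rpow_mul hx.le, ← Real.rpow_add hx] at h1
  have he : -q * (1/(1+q)) + q/(1+q) = 0 := by ring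
  rw [he, Real.rpow_zero] at h1
  have h2 := mul_le_mul_of_nonneg_left h1 hq1.le
  have h3 : (1+q) * (1/(1+q) * ((1+t) ^ (-q)) + q/(1+q) * (1+t))
      = (1+t) ^ (-q) + q * (1+t) := by field_simp
  rw [h3, mul_one] at h2
  linarith

lemma hda {q : ℝ} {t : ℝ} (ht : -1 < t) :
    HasDerivAt (fun t : ℝ => (1+t) ^ (-q)) (-q * (1+t) ^ (-q-1)) t := by
  have hx : (0:ℝ) < 1 + t := by linarith
  have h1 : HasDerivAt (fun t : ℝ => 1 + t) 1 t := (hasDerivAt_id t).const_add 1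
  have := h1.rpow_const (p := -q) (Or.inl hx.ne')
  simpa [mul_comm] using this

-- Level 2 function
lemma L2mono {q : ℝ} (hq : 0 < q) :
    MonotoneOn (fun t : ℝ => 1 - q*t + q*(q+1)/2*t^2 - (1+t) ^ (-q)) (Set.Ioi (-1)) := by
  have hder : ∀ t ∈ Set.Ioi (-1:ℝ), HasDerivAt
      (fun t : ℝ => 1 - q*t + q*(q+1)/2*t^2 - (1+t) ^ (-q))
      (-q + q*(q+1)*t + q * (1+t) ^ (-(q+1))) t := by
    intro t ht
    have h1 : HasDerivAt (fun t : ℝ => 1 - q*t + q*(q+1)/2*t^2)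
        (-q + q*(q+1)*t) t := by
      have hid : HasDerivAt (fun t : ℝ => t) 1 t := hasDerivAt_id t
      have hsq : HasDerivAt (fun t : ℝ => t^2) (2*t) t := by
        simpa using hasDerivAt_pow 2 t
      have := ((hid.const_mul q).const_sub 1).add (hsq.const_mul (q*(q+1)/2))
      exact this.congr_deriv (by ring)
    have h2 := hda (q := q) ht
    have := h1.sub h2
    have hne : -(q+1) = -q - 1 := by ring
    exact this.congr_deriv (by rw [hne]; ring)
  apply monotoneOn_of_deriv_nonneg (convex_Ioi _)
  · exact fun t ht => (hder t ht).continuousAt.continuousWithinAt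
  · intro t ht
    rw [interior_Ioi] at ht
    exact (hder t ht).differentiableAt.differentiableWithinAt
  · intro t ht
    rw [interior_Ioi] at ht
    rw [(hder t ht).deriv]
    have hb := bern_neg (q := q+1) (by linarith) ht
    nlinarith [hb]

lemma L2val {q : ℝ} : (1 - q*(0:ℝ) + q*(q+1)/2*(0:ℝ)^2 - (1+(0:ℝ)) ^ (-q)) = 0 := by
  norm_num

-- Level 3: cubic lower bound
lemma cubic_lb {q t : ℝ} (hq : 0 < q) (ht : -1 < t) :
    1 - q*t + q*(q+1)/2*t^2 - q*(q+1)*(q+2)/6*t^3 ≤ (1+t) ^ (-q) := by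
  set H : ℝ → ℝ := fun t => (1+t) ^ (-q) - (1 - q*t + q*(q+1)/2*t^2 - q*(q+1)*(q+2)/6*t^3)
    with hH
  have hder : ∀ t ∈ Set.Ioi (-1:ℝ), HasDerivAt H
      (q * (1 - (q+1)*t + (q+1)*(q+2)/2*t^2 - (1+t) ^ (-(q+1)))) t := by
    intro t ht
    have h2 := hda (q := q) ht
    have hid : HasDerivAt (fun t : ℝ => t) 1 t := hasDerivAt_id t
    have hsq : HasDerivAt (fun t : ℝ => t^2) (2*t) t := by
      simpa using hasDerivAt_pow 2 t
    have hcb : HasDerivAt (fun t : ℝ => t^3) (3*t^2) t := by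
      simpa using hasDerivAt_pow 3 t
    have h1 : HasDerivAt (fun t : ℝ => 1 - q*t + q*(q+1)/2*t^2 - q*(q+1)*(q+2)/6*t^3)
        (-q + q*(q+1)*t - q*(q+1)*(q+2)/2*t^2) t := by
      have := (((hid.const_mul q).const_sub 1).add (hsq.const_mul (q*(q+1)/2))).sub
        (hcb.const_mul (q*(q+1)*(q+2)/6))
      exact this.congr_deriv (by ring)
    have := h2.sub h1
    have hne : -(q+1) = -q - 1 := by ring
    exact this.congr_deriv (by rw [hne]; ring)
  have hmono := L2mono (q := q+1) (by linarith)
  have hsign : ∀ u ∈ Set.Ioi (-1:ℝ), u ≤ 0 →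
      (1 - (q+1)*u + (q+1)*(q+2)/2*u^2 - (1+u) ^ (-(q+1))) ≤ 0 := by
    intro u hu hu0
    have h2 : (1 - (q+1)*u + (q+1)*(q+1+1)/2*u^2 - (1+u) ^ (-(q+1)))
        ≤ (1 - (q+1)*(0:ℝ) + (q+1)*(q+1+1)/2*(0:ℝ)^2 - (1+(0:ℝ)) ^ (-(q+1))) :=
      hmono hu (by norm_num : (0:ℝ) ∈ Set.Ioi (-1:ℝ)) hu0
    have h3 : (1 - (q+1)*(0:ℝ) + (q+1)*(q+1+1)/2*(0:ℝ)^2 - (1+(0:ℝ)) ^ (-(q+1))) = 0 := by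
      norm_num
    linarith
  have hsign' : ∀ u : ℝ, 0 ≤ u →
      0 ≤ (1 - (q+1)*u + (q+1)*(q+2)/2*u^2 - (1+u) ^ (-(q+1))) := by
    intro u hu0
    have h2 : (1 - (q+1)*(0:ℝ) + (q+1)*(q+1+1)/2*(0:ℝ)^2 - (1+(0:ℝ)) ^ (-(q+1)))
        ≤ (1 - (q+1)*u + (q+1)*(q+1+1)/2*u^2 - (1+u) ^ (-(q+1))) :=
      hmono (by norm_num : (0:ℝ) ∈ Set.Ioi (-1:ℝ))
        (by simp only [Set.mem_Ioi]; linarith) hu0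
    have h3 : (1 - (q+1)*(0:ℝ) + (q+1)*(q+1+1)/2*(0:ℝ)^2 - (1+(0:ℝ)) ^ (-(q+1))) = 0 := by
      norm_num
    linarith
  have hH0 : H 0 = 0 := by simp [hH]
  rcases le_or_gt 0 t with h0 | h0
  · -- monotone on Ici 0
    have hm : MonotoneOn H (Set.Ici (0:ℝ)) := by
      apply monotoneOn_of_deriv_nonneg (convex_Ici _)
      · exact fun u hu => (hder u (by simp only [Set.mem_Ioi]; simp only [Set.mem_Ici] at hu; linarith)).continuousAt.continuousWithinAt
      · intro u hu
        rw [interior_Ici] at hu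
        exact (hder u (by simp only [Set.mem_Ioi]; simp only [Set.mem_Ioi] at hu; linarith)).differentiableAt.differentiableWithinAt
      · intro u hu
        rw [interior_Ici] at hu
        simp only [Set.mem_Ioi] at hu
        rw [(hder u (by simp only [Set.mem_Ioi]; linarith)).deriv]
        exact mul_nonneg hq.le (hsign' u hu.le)
    have := hm (Set.self_mem_Ici) (Set.mem_Ici.mpr h0) h0
    rw [hH0] at this
    simpa [hH, sub_nonneg] using this
  · -- antitone on Ioc (-1) 0
    have hm : AntitoneOn H (Set.Ioc (-1:ℝ) 0) := by
      apply antitoneOn_of_deriv_nonpos (convex_Ioc _ _)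
      · exact fun u hu => (hder u hu.1).continuousAt.continuousWithinAt
      · intro u hu
        rw [interior_Ioc] at hu
        exact (hder u hu.1).differentiableAt.differentiableWithinAt
      · intro u hu
        rw [interior_Ioc] at hu
        rw [(hder u hu.1).deriv]
        have := hsign u hu.1 hu.2.le
        nlinarith [this]
    have := hm (Set.mem_Ioc.mpr ⟨ht, h0.le⟩) (Set.mem_Ioc.mpr ⟨by norm_num, le_refl 0⟩) h0.le
    rw [hH0] at this
    simpa [hH, sub_nonneg] using this

theorem stmt_8 {n : ℕ} (hn : 1 ≤ n) (p C₄ : ℝ) (hp : 0 < p) (hC₄ : C₄ ∈ Set.Ioo (0 : ℝ) 1)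
    (h : EuclideanSpace ℝ (Fin n)) (hh : ‖h‖ < C₄ / 2) :
    p * (-‖h‖ ^ 2 + (p + 2) * (h (⟨0, by omega⟩ : Fin n)) ^ 2
        - (1 / 2) * (p + 2) * (p + 4) * (h (⟨0, by omega⟩ : Fin n)) ^ 2 * ‖h‖ ^ 2)
      ≤ ‖EuclideanSpace.single (⟨0, by omega⟩ : Fin n) (1 : ℝ) + h‖ ^ (-p)
        + ‖EuclideanSpace.single (⟨0, by omega⟩ : Fin n) (1 : ℝ) - h‖ ^ (-p) - 2 := by
  set i0 : Fin n := ⟨0, by omega⟩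
  set e : EuclideanSpace ℝ (Fin n) := EuclideanSpace.single i0 (1:ℝ) with he
  set s : ℝ := h i0 with hs
  set r : ℝ := ‖h‖ with hr
  have hr0 : 0 ≤ r := norm_nonneg h
  have hrhalf : r < 1/2 := by
    have := hC₄.2
    calc r < C₄ / 2 := hh
    _ < 1/2 := by linarith
  have hinner : (inner ℝ e h : ℝ) = s := by
    rw [he]
    simp [EuclideanSpace.inner_single_left]
    exact hs.symm
  have hnorme : ‖e‖ = 1 := by
    rw [he, EuclideanSpace.norm_single]
    norm_num
  have hs2 : s^2 ≤ r^2 := by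
    have h1 : |(inner ℝ e h : ℝ)| ≤ ‖e‖ * ‖h‖ := abs_real_inner_le_norm e h
    rw [hinner, hnorme, one_mul] at h1
    nlinarith [abs_nonneg s, le_abs_self s, neg_abs_le s]
  have hA : ‖e + h‖^2 = 1 + (2*s + r^2) := by
    rw [norm_add_sq_real, hinner, hnorme]
    ring
  have hB : ‖e - h‖^2 = 1 + (-2*s + r^2) := by
    rw [norm_sub_sq_real, hinner, hnorme]
    ring
  have hconv : ∀ x : EuclideanSpace ℝ (Fin n), ‖x‖ ^ (-p) = (‖x‖^2) ^ (-(p/2)) := by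
    intro x
    rw [← Real.rpow_natCast ‖x‖ 2, ← Real.rpow_mul (norm_nonneg x)]
    norm_num
    congr 1
    ring
  have ha1 : (-1:ℝ) < 2*s + r^2 := by nlinarith
  have hb1 : (-1:ℝ) < -2*s + r^2 := by nlinarith
  have hq : 0 < p/2 := by linarith
  have TA := cubic_lb (q := p/2) (t := 2*s + r^2) hq ha1
  have TB := cubic_lb (q := p/2) (t := -2*s + r^2) hq hb1
  rw [hconv (e + h), hconv (e - h), hA, hB]
  clear_value s r
  clear hinner hnorme hA hB he hs hr hh
  by_cases hc : (p+4) * r^2 ≤ 6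
  · have key : 0 ≤ p*(p+2)*r^4*(6-(p+4)*r^2) := by
      apply mul_nonneg
      · positivity
      · linarith
    linarith [TA, TB, key]
  · push_neg at hc
    have hXnn : (0:ℝ) ≤ (1 + (2*s + r^2)) ^ (-(p/2)) := Real.rpow_nonneg (by linarith) _
    have hYnn : (0:ℝ) ≤ (1 + (-2*s + r^2)) ^ (-(p/2)) := Real.rpow_nonneg (by linarith) _
    have h1 : 0 ≤ p*(p+2)*s^2*((p+4)*r^2/2 - 1) := by
      apply mul_nonneg
      · positivity
      · linarith
    have hr2 : r^2 < 1/4 := by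
      have h4 : r * r < (1/2) * (1/2) := mul_lt_mul' hrhalf.le hrhalf hr0 (by norm_num)
      nlinarith [h4]
    have h5 : 5 ≤ p * r^2 := by linarith [hc, hr2]
    linarith [h1, h5, hXnn, hYnn]

end
end
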